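/- arXiv:1203.2423 — 3 statements merged into one kernel-verified Lean document; each statement's English description precedes it below -/
import Mathlib

section
/- Expression of the Ricci component R₂₂ on the initial null hypersurface (first identity of (3.5), proved in Appendix B): Suppose g₂₂(x) = g₂₃(x) = g₂₄(x) = 0 at every point x of G¹. Then at every point of G¹ one has R₂₂ = ¼·g^{12}·(Σ_{α,β∈{3,4}} g^{αβ}∂₂g_{αβ})·(2∂₂g₁₂ − ∂₁g₂₂) + ¼·Σ_{β,λ∈{3,4}} (∂₂g^{βλ})(∂₂g_{λβ}) − ½·∂₂(Σ_{α,β∈{3,4}} g^{αβ}∂₂g_{αβ}). -/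
noncomputable section
open scoped ContDiff

/-- Partial derivative `∂ᵢ f` of a real-valued function on `ℝ⁴ = (Fin 4 → ℝ)`. -/
def pd (i : Fin 4) (f : (Fin 4 → ℝ) → ℝ) (x : Fin 4 → ℝ) : ℝ :=
  fderiv ℝ f x (Pi.single i 1)

/-- Metric component `g_{ij}` as a function of the point. -/
def lo (g : (Fin 4 → ℝ) → Matrix (Fin 4) (Fin 4) ℝ) (i j : Fin 4) (x : Fin 4 → ℝ) : ℝ :=
  g x i j

/-- Inverse metric component `g^{ij}` as a function of the point. -/
def up (g : (Fin 4 → ℝ) → Matrix (Fin 4) (Fin 4) ℝ) (i j : Fin 4) (x : Fin 4 → ℝ) : ℝ :=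
  (g x)⁻¹ i j

/-- Christoffel symbol `Γ^k_{ij} = ½ g^{km}(∂ᵢg_{mj} + ∂ⱼg_{mi} − ∂_m g_{ij})`. -/
def Chr (g : (Fin 4 → ℝ) → Matrix (Fin 4) (Fin 4) ℝ) (k i j : Fin 4) (x : Fin 4 → ℝ) : ℝ :=
  (1 / 2) * ∑ m, up g k m x * (pd i (lo g m j) x + pd j (lo g m i) x - pd m (lo g i j) x)

/-- Contracted Christoffel symbol `Γ^k = g^{ij} Γ^k_{ij}`. -/
def ChrC (g : (Fin 4 → ℝ) → Matrix (Fin 4) (Fin 4) ℝ) (k : Fin 4) (x : Fin 4 → ℝ) : ℝ :=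
  ∑ i, ∑ j, up g i j x * Chr g k i j x

/-- Ricci tensor `R_{ij} = ∂_k Γ^k_{ij} − ∂_j Γ^k_{ik} + Γ^k_{kl} Γ^l_{ij} − Γ^k_{jl} Γ^l_{ik}`. -/
def Ric (g : (Fin 4 → ℝ) → Matrix (Fin 4) (Fin 4) ℝ) (i j : Fin 4) (x : Fin 4 → ℝ) : ℝ :=
  (∑ k, pd k (Chr g k i j) x) - (∑ k, pd j (Chr g k i k) x)
    + (∑ k, ∑ l, Chr g k k l x * Chr g l i j x)
    - (∑ k, ∑ l, Chr g k j l x * Chr g l i k x)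

section AuxLemmas

lemma contDiff_det4 {M : (Fin 4 → ℝ) → Matrix (Fin 4) (Fin 4) ℝ}
    (h : ∀ i j, ContDiff ℝ ∞ fun x => M x i j) :
    ContDiff ℝ ∞ fun x => (M x).det := by
  have e : (fun x => (M x).det)
      = fun x => ∑ σ : Equiv.Perm (Fin 4), ((Equiv.Perm.sign σ : ℤ) : ℝ) *
          (M x (σ 0) 0 * (M x (σ 1) 1 * (M x (σ 2) 2 * M x (σ 3) 3))) := by
    funext x
    rw [Matrix.det_apply]
    refine Finset.sum_congr rfl fun σ _ => ?_
    rw [Fin.prod_univ_four]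
    simp [Units.smul_def, zsmul_eq_mul]
    ring
  rw [e]
  exact ContDiff.sum fun σ _ =>
    contDiff_const.mul ((h _ _).mul ((h _ _).mul ((h _ _).mul (h _ _))))

lemma smooth_up {g : (Fin 4 → ℝ) → Matrix (Fin 4) (Fin 4) ℝ}
    (hg : ∀ i j, ContDiff ℝ ∞ fun x => g x i j)
    (hinv : ∀ x, IsUnit (g x).det) (i j : Fin 4) :
    ContDiff ℝ ∞ (up g i j) := by
  have hdet : ContDiff ℝ ∞ fun x => (g x).det := contDiff_det4 hg
  have hne : ∀ x, (g x).det ≠ 0 := fun x => (isUnit_iff_ne_zero).mp (hinv x)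
  have hadj : ContDiff ℝ ∞ fun x => (g x).adjugate i j := by
    have e : (fun x => (g x).adjugate i j)
        = fun x => ((g x).updateRow j (Pi.single i 1)).det := by
      funext x; rw [Matrix.adjugate_apply]
    rw [e]
    refine contDiff_det4 fun a b => ?_
    rcases eq_or_ne a j with rfl | hab
    · simpa [Matrix.updateRow_apply] using contDiff_const
    · simpa [Matrix.updateRow_apply, hab] using hg a b
  have e : up g i j = fun x => ((g x).det)⁻¹ * (g x).adjugate i j := by
    funext x
    show (g x)⁻¹ i j = _
    rw [Matrix.inv_def]
    simp [Ring.inverse_eq_inv', smul_eq_mul]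
  rw [e]
  exact (hdet.inv hne).mul hadj

lemma smooth_pd {f : (Fin 4 → ℝ) → ℝ} (hf : ContDiff ℝ ∞ f) (k : Fin 4) :
    ContDiff ℝ ∞ (pd k f) := by
  have e : pd k f = fun x => fderiv ℝ f x (Pi.single k 1) := rfl
  rw [e]
  exact (hf.fderiv_right (le_refl _)).clm_apply contDiff_const

variable {x : Fin 4 → ℝ} {k : Fin 4}

lemma pd_add {f h : (Fin 4 → ℝ) → ℝ} (hf : DifferentiableAt ℝ f x)
    (hh : DifferentiableAt ℝ h x) :
    pd k (fun y => f y + h y) x = pd k f x + pd k h x := by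
  unfold pd; rw [fderiv_fun_add hf hh]; simp

lemma pd_sub {f h : (Fin 4 → ℝ) → ℝ} (hf : DifferentiableAt ℝ f x)
    (hh : DifferentiableAt ℝ h x) :
    pd k (fun y => f y - h y) x = pd k f x - pd k h x := by
  unfold pd; rw [fderiv_fun_sub hf hh]; simp

lemma pd_mul {f h : (Fin 4 → ℝ) → ℝ} (hf : DifferentiableAt ℝ f x)
    (hh : DifferentiableAt ℝ h x) :
    pd k (fun y => f y * h y) x = pd k f x * h x + f x * pd k h x := by
  unfold pd; rw [fderiv_fun_mul hf hh]; simp; ring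

lemma pd_const_mul {f : (Fin 4 → ℝ) → ℝ} (hf : DifferentiableAt ℝ f x) (c : ℝ) :
    pd k (fun y => c * f y) x = c * pd k f x := by
  unfold pd; rw [fderiv_const_mul hf]; simp

lemma pd_finsum {ι : Type*} (s : Finset ι) (F : ι → (Fin 4 → ℝ) → ℝ)
    (hF : ∀ i ∈ s, DifferentiableAt ℝ (F i) x) :
    pd k (fun y => ∑ i ∈ s, F i y) x = ∑ i ∈ s, pd k (F i) x := by
  unfold pd; rw [fderiv_fun_sum hF]; simp

lemma pd_tangent {f : (Fin 4 → ℝ) → ℝ} (hx : x 0 = 0)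
    (h0 : ∀ y : Fin 4 → ℝ, y 0 = 0 → f y = 0) {i : Fin 4} (hi : i ≠ 0)
    (hf : DifferentiableAt ℝ f x) : pd i f x = 0 := by
  have hline : (fun t : ℝ => f (x + t • (Pi.single i 1 : Fin 4 → ℝ))) = fun _ => (0:ℝ) := by
    funext t
    apply h0
    simp [hx, Pi.single_eq_of_ne (Ne.symm hi)]
  have hL : HasDerivAt (fun t : ℝ => x + t • (Pi.single i 1 : Fin 4 → ℝ))
      (Pi.single i 1) 0 := by
    simpa using ((hasDerivAt_id (0:ℝ)).smul_const (Pi.single i 1 : Fin 4 → ℝ)).const_add x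
  have hx0 : x + (0:ℝ) • (Pi.single i 1 : Fin 4 → ℝ) = x := by simp
  have hc : HasDerivAt (fun t : ℝ => f (x + t • (Pi.single i 1 : Fin 4 → ℝ)))
      (fderiv ℝ f x (Pi.single i 1)) 0 := by
    have hf' : HasFDerivAt f (fderiv ℝ f x) (x + (0:ℝ) • (Pi.single i 1 : Fin 4 → ℝ)) :=
      hx0.symm ▸ hf.hasFDerivAt
    exact (hf'.comp_hasDerivAt (0:ℝ) hL)
  rw [hline] at hc
  exact hc.unique (hasDerivAt_const 0 0)

lemma pd_comm {f : (Fin 4 → ℝ) → ℝ} (hf : ContDiff ℝ ∞ f) (k l : Fin 4) (x : Fin 4 → ℝ) :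
    pd k (pd l f) x = pd l (pd k f) x := by
  have hd : Differentiable ℝ (fderiv ℝ f) :=
    (hf.fderiv_right (m := ∞) (le_refl _)).differentiable (by simp)
  have key : ∀ (m : Fin 4) (v : Fin 4 → ℝ), pd m (fun y => fderiv ℝ f y v) x
      = fderiv ℝ (fderiv ℝ f) x (Pi.single m 1) v := by
    intro m v
    unfold pd
    rw [fderiv_clm_apply (hd x) (differentiableAt_const v)]
    simp
  have hsy : IsSymmSndFDerivAt ℝ f x :=
    (hf.contDiffAt (x := x)).isSymmSndFDerivAt (n := ∞) (by simp; exact WithTop.coe_le_coe.mpr le_top)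
  show pd k (fun y => fderiv ℝ f y (Pi.single l 1)) x
      = pd l (fun y => fderiv ℝ f y (Pi.single k 1)) x
  rw [key k (Pi.single l 1), key l (Pi.single k 1)]
  exact hsy (Pi.single k 1) (Pi.single l 1)

lemma inv_contract_right {g : (Fin 4 → ℝ) → Matrix (Fin 4) (Fin 4) ℝ}
    (hinv : ∀ x, IsUnit (g x).det) (a b : Fin 4) (x : Fin 4 → ℝ) :
    (∑ c, lo g a c x * up g c b x) = if a = b then (1:ℝ) else 0 := by
  have h2 : g x * (g x)⁻¹ = 1 := Matrix.mul_nonsing_inv _ (hinv x)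
  calc (∑ c, lo g a c x * up g c b x) = (g x * (g x)⁻¹) a b := (Matrix.mul_apply).symm
    _ = (1 : Matrix (Fin 4) (Fin 4) ℝ) a b := by rw [h2]
    _ = _ := Matrix.one_apply

lemma pd_up {g : (Fin 4 → ℝ) → Matrix (Fin 4) (Fin 4) ℝ}
    (hg : ∀ i j, ContDiff ℝ ∞ fun x => g x i j)
    (hinv : ∀ x, IsUnit (g x).det) (k a b : Fin 4) (x : Fin 4 → ℝ) :
    pd k (up g a b) x = -∑ c, ∑ d, up g a c x * pd k (lo g c d) x * up g d b x := by
  have hup : ∀ i j, ContDiff ℝ ∞ (up g i j) := smooth_up hg hinv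
  have hlo : ∀ i j : Fin 4, ContDiff ℝ ∞ (lo g i j) := fun i j => hg i j
  have dup : ∀ (i j : Fin 4) (y : Fin 4 → ℝ), DifferentiableAt ℝ (up g i j) y :=
    fun i j y => ((hup i j).differentiable (by simp)).differentiableAt
  have dlo : ∀ (i j : Fin 4) (y : Fin 4 → ℝ), DifferentiableAt ℝ (lo g i j) y :=
    fun i j y => ((hlo i j).differentiable (by simp)).differentiableAt
  have dprod : ∀ (c d : Fin 4) (y : Fin 4 → ℝ),
      DifferentiableAt ℝ (fun y => up g a c y * (lo g c d y * up g d b y)) y :=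
    fun c d y => (((hup a c).mul ((hlo c d).mul (hup d b))).differentiable (by simp)).differentiableAt
  have dsum : ∀ (c : Fin 4) (y : Fin 4 → ℝ),
      DifferentiableAt ℝ (fun y => ∑ d, up g a c y * (lo g c d y * up g d b y)) y :=
    fun c y => ((ContDiff.sum fun d _ => (hup a c).mul ((hlo c d).mul (hup d b))).differentiable
      (by simp)).differentiableAt
  have key : up g a b = fun y => ∑ c, ∑ d, up g a c y * (lo g c d y * up g d b y) := by
    funext y
    have h1 : ((g y)⁻¹ * (g y * (g y)⁻¹)) a b = (g y)⁻¹ a b := by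
      rw [Matrix.mul_nonsing_inv _ (hinv y), mul_one]
    calc up g a b y = ((g y)⁻¹ * (g y * (g y)⁻¹)) a b := h1.symm
      _ = ∑ c, (g y)⁻¹ a c * (g y * (g y)⁻¹) c b := Matrix.mul_apply
      _ = ∑ c, ∑ d, up g a c y * (lo g c d y * up g d b y) := by
          refine Finset.sum_congr rfl fun c _ => ?_
          rw [Matrix.mul_apply, Finset.mul_sum]
          rfl
  have expand : pd k (up g a b) x
      = ∑ c, ∑ d, (pd k (up g a c) x * (lo g c d x * up g d b x)
          + (up g a c x * (pd k (lo g c d) x * up g d b x)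
            + up g a c x * (lo g c d x * pd k (up g d b) x))) := by
    conv_lhs => rw [key]
    rw [pd_finsum _ _ (fun c _ => dsum c x)]
    refine Finset.sum_congr rfl fun c _ => ?_
    rw [pd_finsum _ _ (fun d _ => dprod c d x)]
    refine Finset.sum_congr rfl fun d _ => ?_
    rw [pd_mul (dup a c x) ((((hlo c d).mul (hup d b)).differentiable (by simp)).differentiableAt),
        pd_mul (dlo c d x) (dup d b x)]
    ring
  have hGH : ∀ c, (∑ d, lo g c d x * up g d b x) = if c = b then (1:ℝ) else 0 :=
    fun c => inv_contract_right hinv c b x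
  have hHG : ∀ d, (∑ c, up g a c x * lo g c d x) = if a = d then (1:ℝ) else 0 := by
    intro d
    have h2 : (g x)⁻¹ * g x = 1 := Matrix.nonsing_inv_mul _ (hinv x)
    calc (∑ c, up g a c x * lo g c d x) = ((g x)⁻¹ * g x) a d := (Matrix.mul_apply).symm
      _ = (1 : Matrix (Fin 4) (Fin 4) ℝ) a d := by rw [h2]
      _ = _ := Matrix.one_apply
  have hS1 : (∑ c, ∑ d, pd k (up g a c) x * (lo g c d x * up g d b x)) = pd k (up g a b) x := by
    have e1 : ∀ c : Fin 4, (∑ d, pd k (up g a c) x * (lo g c d x * up g d b x))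
        = pd k (up g a c) x * (if c = b then (1:ℝ) else 0) := fun c => by
      rw [← Finset.mul_sum, hGH c]
    rw [Finset.sum_congr rfl fun c _ => e1 c]
    simp
  have hS3 : (∑ c, ∑ d, up g a c x * (lo g c d x * pd k (up g d b) x)) = pd k (up g a b) x := by
    rw [Finset.sum_comm]
    have e3 : ∀ d : Fin 4, (∑ c, up g a c x * (lo g c d x * pd k (up g d b) x))
        = (if a = d then (1:ℝ) else 0) * pd k (up g d b) x := fun d => by
      have hsm : (∑ c, up g a c x * lo g c d x) * pd k (up g d b) x
          = ∑ c, up g a c x * lo g c d x * pd k (up g d b) x := by rw [Finset.sum_mul]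
      rw [← hHG d, hsm]
      exact Finset.sum_congr rfl fun c _ => by ring
    rw [Finset.sum_congr rfl fun d _ => e3 d]
    simp
  have split : pd k (up g a b) x
      = (∑ c, ∑ d, pd k (up g a c) x * (lo g c d x * up g d b x))
        + ((∑ c, ∑ d, up g a c x * (pd k (lo g c d) x * up g d b x))
          + (∑ c, ∑ d, up g a c x * (lo g c d x * pd k (up g d b) x))) := by
    rw [expand]
    simp only [Finset.sum_add_distrib]
  have htgt : (∑ c, ∑ d, up g a c x * (pd k (lo g c d) x * up g d b x))
      = ∑ c, ∑ d, up g a c x * pd k (lo g c d) x * up g d b x :=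
    Finset.sum_congr rfl fun c _ => Finset.sum_congr rfl fun d _ => by ring
  rw [hS1, hS3, htgt] at split
  linarith

lemma pd_Chr {g : (Fin 4 → ℝ) → Matrix (Fin 4) (Fin 4) ℝ}
    (hg : ∀ i j, ContDiff ℝ ∞ fun x => g x i j)
    (hinv : ∀ x, IsUnit (g x).det) (k' k i j : Fin 4) (x : Fin 4 → ℝ) :
    pd k' (Chr g k i j) x = (1/2) * ∑ m,
      (pd k' (up g k m) x * (pd i (lo g m j) x + pd j (lo g m i) x - pd m (lo g i j) x)
        + up g k m x * (pd k' (pd i (lo g m j)) x + pd k' (pd j (lo g m i)) x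
            - pd k' (pd m (lo g i j)) x)) := by
  have hlo : ∀ i j : Fin 4, ContDiff ℝ ∞ (lo g i j) := fun i j => hg i j
  have hup : ∀ i j, ContDiff ℝ ∞ (up g i j) := smooth_up hg hinv
  have hbr : ∀ m : Fin 4, ContDiff ℝ ∞
      (fun y => pd i (lo g m j) y + pd j (lo g m i) y - pd m (lo g i j) y) :=
    fun m => ((smooth_pd (hlo m j) i).add (smooth_pd (hlo m i) j)).sub (smooth_pd (hlo i j) m)
  have hterm : ∀ m : Fin 4, ContDiff ℝ ∞
      (fun y => up g k m y * (pd i (lo g m j) y + pd j (lo g m i) y - pd m (lo g i j) y)) :=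
    fun m => (hup k m).mul (hbr m)
  have dAt : ∀ {f : (Fin 4 → ℝ) → ℝ}, ContDiff ℝ ∞ f → DifferentiableAt ℝ f x :=
    fun hf => (hf.differentiable (by simp)).differentiableAt
  have step1 : pd k' (Chr g k i j) x = (1/2) * pd k'
      (fun y => ∑ m, up g k m y *
        (pd i (lo g m j) y + pd j (lo g m i) y - pd m (lo g i j) y)) x :=
    pd_const_mul (dAt (ContDiff.sum fun m _ => hterm m)) _
  have step2 : pd k' (fun y => ∑ m, up g k m y *
        (pd i (lo g m j) y + pd j (lo g m i) y - pd m (lo g i j) y)) x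
      = ∑ m, pd k' (fun y => up g k m y *
        (pd i (lo g m j) y + pd j (lo g m i) y - pd m (lo g i j) y)) x :=
    pd_finsum _ _ (fun m _ => dAt (hterm m))
  rw [step1, step2]
  congr 1
  refine Finset.sum_congr rfl fun m _ => ?_
  rw [pd_mul (dAt (hup k m)) (dAt (hbr m)),
      pd_sub (dAt ((smooth_pd (hlo m j) i).add (smooth_pd (hlo m i) j)))
        (dAt (smooth_pd (hlo i j) m)),
      pd_add (dAt (smooth_pd (hlo m j) i)) (dAt (smooth_pd (hlo m i) j))]

end AuxLemmas

set_option maxHeartbeats 1000000 in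
/-- first identity of (3.5), Appendix B: on the null hypersurface
`G¹ = {x¹ = 0}` (paper indices `1,2,3,4` realized as `0,1,2,3 : Fin 4`), if
`g₂₂ = g₂₃ = g₂₄ = 0` on `G¹`, then
`R₂₂ = ¼ g^{12} (g^{αβ}∂₂g_{αβ})(2∂₂g₁₂ − ∂₁g₂₂) + ¼ (∂₂g^{βλ})(∂₂g_{λβ})
      − ½ ∂₂(g^{αβ}∂₂g_{αβ})`, Greek indices summed over `{3,4}`. -/
theorem ricci_22_on_null_hypersurface
    (g : (Fin 4 → ℝ) → Matrix (Fin 4) (Fin 4) ℝ)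
    (hg : ∀ i j, ContDiff ℝ (⊤ : ℕ∞) fun x => g x i j)
    (hsymm : ∀ x, (g x).IsSymm)
    (hinv : ∀ x, IsUnit (g x).det)
    (hnull : ∀ x : Fin 4 → ℝ, x 0 = 0 → g x 1 1 = 0 ∧ g x 1 2 = 0 ∧ g x 1 3 = 0)
    (x : Fin 4 → ℝ) (hx : x 0 = 0) :
    Ric g 1 1 x =
      (1 / 4) * up g 0 1 x
          * (∑ α ∈ ({2, 3} : Finset (Fin 4)), ∑ β ∈ ({2, 3} : Finset (Fin 4)),
              up g α β x * pd 1 (lo g α β) x)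
          * (2 * pd 1 (lo g 0 1) x - pd 0 (lo g 1 1) x)
        + (1 / 4) * (∑ β ∈ ({2, 3} : Finset (Fin 4)), ∑ lam ∈ ({2, 3} : Finset (Fin 4)),
            pd 1 (up g β lam) x * pd 1 (lo g lam β) x)
        - (1 / 2) * pd 1 (fun y =>
            ∑ α ∈ ({2, 3} : Finset (Fin 4)), ∑ β ∈ ({2, 3} : Finset (Fin 4)),
              up g α β y * pd 1 (lo g α β) y) x := by
  have hg' : ∀ i j, ContDiff ℝ ∞ fun x => g x i j := fun i j => (hg i j).of_le (by simp)
  have hlo : ∀ i j : Fin 4, ContDiff ℝ ∞ (lo g i j) := fun i j => hg' i j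
  have hup : ∀ i j, ContDiff ℝ ∞ (up g i j) := smooth_up hg' hinv
  have dAt : ∀ {f : (Fin 4 → ℝ) → ℝ} {y : Fin 4 → ℝ}, ContDiff ℝ ∞ f → DifferentiableAt ℝ f y :=
    fun hf => (hf.differentiable (by simp)).differentiableAt
  have hlosym : ∀ a b : Fin 4, lo g a b = lo g b a := fun a b => funext fun y => (hsymm y).apply b a
  have hupsym : ∀ a b : Fin 4, up g a b = up g b a := by
    intro a b; funext y
    have hs : ((g y)⁻¹).IsSymm :=
      (Matrix.transpose_nonsing_inv (g y)).trans (congrArg Inv.inv (hsymm y).eq)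
    exact hs.apply b a
  have hlo10 : lo g 1 0 = lo g 0 1 := hlosym 1 0
  have hup10 : up g 1 0 = up g 0 1 := hupsym 1 0
  have hlo20 : lo g 2 0 = lo g 0 2 := hlosym 2 0
  have hup20 : up g 2 0 = up g 0 2 := hupsym 2 0
  have hlo21 : lo g 2 1 = lo g 1 2 := hlosym 2 1
  have hup21 : up g 2 1 = up g 1 2 := hupsym 2 1
  have hlo30 : lo g 3 0 = lo g 0 3 := hlosym 3 0
  have hup30 : up g 3 0 = up g 0 3 := hupsym 3 0
  have hlo31 : lo g 3 1 = lo g 1 3 := hlosym 3 1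
  have hup31 : up g 3 1 = up g 1 3 := hupsym 3 1
  have hlo32 : lo g 3 2 = lo g 2 3 := hlosym 3 2
  have hup32 : up g 3 2 = up g 2 3 := hupsym 3 2
  have hg11 : g x 1 1 = 0 := (hnull x hx).1
  have hg12 : g x 1 2 = 0 := (hnull x hx).2.1
  have hg13 : g x 1 3 = 0 := (hnull x hx).2.2
  have hdetx : (g x).det ≠ 0 := isUnit_iff_ne_zero.mp (hinv x)
  have hG01ne : g x 0 1 ≠ 0 := by
    intro h
    apply hdetx
    apply Matrix.det_eq_zero_of_row_eq_zero 1
    intro j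
    fin_cases j
    · exact ((hsymm x).apply 0 1).trans h
    · exact hg11
    · exact hg12
    · exact hg13
  have hg10ne : g x 1 0 ≠ 0 := by rw [(hsymm x).apply 0 1]; exact hG01ne
  have hrow : ∀ b : Fin 4, g x 1 0 * up g 0 b x = if (1:Fin 4) = b then (1:ℝ) else 0 := by
    intro b
    have h := inv_contract_right hinv 1 b x
    rw [Fin.sum_univ_four] at h
    simp only [lo] at h
    rw [hg11, hg12, hg13] at h
    simpa using h
  have hH00 : up g 0 0 x = 0 := by
    have h := hrow 0; rw [if_neg (by decide)] at h
    exact (mul_eq_zero.mp h).resolve_left hg10ne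
  have hH02 : up g 0 2 x = 0 := by
    have h := hrow 2; rw [if_neg (by decide)] at h
    exact (mul_eq_zero.mp h).resolve_left hg10ne
  have hH03 : up g 0 3 x = 0 := by
    have h := hrow 3; rw [if_neg (by decide)] at h
    exact (mul_eq_zero.mp h).resolve_left hg10ne
  have hDz : ∀ (kk m : Fin 4), kk ≠ 0 → m ≠ 0 → ∀ y : Fin 4 → ℝ, y 0 = 0 → pd kk (lo g 1 m) y = 0 := by
    intro kk m hk hm y hy
    refine pd_tangent hy ?_ hk (dAt (hlo 1 m))
    intro z hz
    have h3 := hnull z hz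
    show g z 1 m = 0
    fin_cases m
    · exact absurd rfl hm
    · exact h3.1
    · exact h3.2.1
    · exact h3.2.2
  have hEz : ∀ (kk l m : Fin 4), kk ≠ 0 → l ≠ 0 → m ≠ 0 → pd kk (pd l (lo g 1 m)) x = 0 :=
    fun kk l m hk hl hm => pd_tangent hx (fun y hy => hDz l m hl hm y hy) hk (dAt (smooth_pd (hlo 1 m) l))
  have hD1_1 : pd 1 (lo g 1 1) x = 0 := hDz 1 1 (by decide) (by decide) x hx
  have hD1_2 : pd 1 (lo g 1 2) x = 0 := hDz 1 2 (by decide) (by decide) x hx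
  have hD1_3 : pd 1 (lo g 1 3) x = 0 := hDz 1 3 (by decide) (by decide) x hx
  have hD2_1 : pd 2 (lo g 1 1) x = 0 := hDz 2 1 (by decide) (by decide) x hx
  have hD2_2 : pd 2 (lo g 1 2) x = 0 := hDz 2 2 (by decide) (by decide) x hx
  have hD2_3 : pd 2 (lo g 1 3) x = 0 := hDz 2 3 (by decide) (by decide) x hx
  have hD3_1 : pd 3 (lo g 1 1) x = 0 := hDz 3 1 (by decide) (by decide) x hx
  have hD3_2 : pd 3 (lo g 1 2) x = 0 := hDz 3 2 (by decide) (by decide) x hx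
  have hD3_3 : pd 3 (lo g 1 3) x = 0 := hDz 3 3 (by decide) (by decide) x hx
  have hE11_1 : pd 1 (pd 1 (lo g 1 1)) x = 0 := hEz 1 1 1 (by decide) (by decide) (by decide)
  have hE11_2 : pd 1 (pd 1 (lo g 1 2)) x = 0 := hEz 1 1 2 (by decide) (by decide) (by decide)
  have hE11_3 : pd 1 (pd 1 (lo g 1 3)) x = 0 := hEz 1 1 3 (by decide) (by decide) (by decide)
  have hE12_1 : pd 1 (pd 2 (lo g 1 1)) x = 0 := hEz 1 2 1 (by decide) (by decide) (by decide)
  have hE12_2 : pd 1 (pd 2 (lo g 1 2)) x = 0 := hEz 1 2 2 (by decide) (by decide) (by decide)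
  have hE12_3 : pd 1 (pd 2 (lo g 1 3)) x = 0 := hEz 1 2 3 (by decide) (by decide) (by decide)
  have hE13_1 : pd 1 (pd 3 (lo g 1 1)) x = 0 := hEz 1 3 1 (by decide) (by decide) (by decide)
  have hE13_2 : pd 1 (pd 3 (lo g 1 2)) x = 0 := hEz 1 3 2 (by decide) (by decide) (by decide)
  have hE13_3 : pd 1 (pd 3 (lo g 1 3)) x = 0 := hEz 1 3 3 (by decide) (by decide) (by decide)
  have hE22_1 : pd 2 (pd 2 (lo g 1 1)) x = 0 := hEz 2 2 1 (by decide) (by decide) (by decide)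
  have hE22_2 : pd 2 (pd 2 (lo g 1 2)) x = 0 := hEz 2 2 2 (by decide) (by decide) (by decide)
  have hE22_3 : pd 2 (pd 2 (lo g 1 3)) x = 0 := hEz 2 2 3 (by decide) (by decide) (by decide)
  have hE23_1 : pd 2 (pd 3 (lo g 1 1)) x = 0 := hEz 2 3 1 (by decide) (by decide) (by decide)
  have hE23_2 : pd 2 (pd 3 (lo g 1 2)) x = 0 := hEz 2 3 2 (by decide) (by decide) (by decide)
  have hE23_3 : pd 2 (pd 3 (lo g 1 3)) x = 0 := hEz 2 3 3 (by decide) (by decide) (by decide)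
  have hE33_1 : pd 3 (pd 3 (lo g 1 1)) x = 0 := hEz 3 3 1 (by decide) (by decide) (by decide)
  have hE33_2 : pd 3 (pd 3 (lo g 1 2)) x = 0 := hEz 3 3 2 (by decide) (by decide) (by decide)
  have hE33_3 : pd 3 (pd 3 (lo g 1 3)) x = 0 := hEz 3 3 3 (by decide) (by decide) (by decide)
  have hpc10 : ∀ c d : Fin 4, pd 1 (pd 0 (lo g c d)) x = pd 0 (pd 1 (lo g c d)) x :=
    fun c d => pd_comm (hlo c d) 1 0 x
  have hpc20 : ∀ c d : Fin 4, pd 2 (pd 0 (lo g c d)) x = pd 0 (pd 2 (lo g c d)) x :=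
    fun c d => pd_comm (hlo c d) 2 0 x
  have hpc21 : ∀ c d : Fin 4, pd 2 (pd 1 (lo g c d)) x = pd 1 (pd 2 (lo g c d)) x :=
    fun c d => pd_comm (hlo c d) 2 1 x
  have hpc30 : ∀ c d : Fin 4, pd 3 (pd 0 (lo g c d)) x = pd 0 (pd 3 (lo g c d)) x :=
    fun c d => pd_comm (hlo c d) 3 0 x
  have hpc31 : ∀ c d : Fin 4, pd 3 (pd 1 (lo g c d)) x = pd 1 (pd 3 (lo g c d)) x :=
    fun c d => pd_comm (hlo c d) 3 1 x
  have hpc32 : ∀ c d : Fin 4, pd 3 (pd 2 (lo g c d)) x = pd 2 (pd 3 (lo g c d)) x :=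
    fun c d => pd_comm (hlo c d) 3 2 x
  have hps : pd 1 (fun y =>
      ∑ α ∈ ({2, 3} : Finset (Fin 4)), ∑ β ∈ ({2, 3} : Finset (Fin 4)),
        up g α β y * pd 1 (lo g α β) y) x
      = ∑ α ∈ ({2, 3} : Finset (Fin 4)), ∑ β ∈ ({2, 3} : Finset (Fin 4)),
        (pd 1 (up g α β) x * pd 1 (lo g α β) x + up g α β x * pd 1 (pd 1 (lo g α β)) x) := by
    refine (pd_finsum _ _ fun α _ => ?_).trans (Finset.sum_congr rfl fun α _ => ?_)
    · exact dAt (ContDiff.sum fun β _ => (hup α β).mul (smooth_pd (hlo α β) 1))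
    · refine (pd_finsum _ _ fun β _ => ?_).trans (Finset.sum_congr rfl fun β _ => ?_)
      · exact dAt ((hup α β).mul (smooth_pd (hlo α β) 1))
      · exact pd_mul (dAt (hup α β)) (dAt (smooth_pd (hlo α β) 1))
  rw [hps]
  simp only [Ric]
  simp only [pd_Chr hg' hinv]
  simp only [Chr]
  simp only [pd_up hg' hinv]
  simp only [Fin.sum_univ_four, Finset.sum_pair (show (2:Fin 4) ≠ 3 by decide)]
  simp only [hlo10, hlo20, hlo21, hlo30, hlo31, hlo32, hup10, hup20, hup21, hup30, hup31, hup32, hpc10, hpc20, hpc21, hpc30, hpc31, hpc32]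
  simp only [hH00, hH02, hH03, hD1_1, hD1_2, hD1_3, hD2_1, hD2_2, hD2_3, hD3_1, hD3_2, hD3_3, hE11_1, hE11_2, hE11_3, hE12_1, hE12_2, hE12_3, hE13_1, hE13_2, hE13_3, hE22_1, hE22_2, hE22_3, hE23_1, hE23_2, hE23_3, hE33_1, hE33_2, hE33_3, mul_zero, zero_mul, add_zero, zero_add, neg_zero, sub_zero]
  ring
end
end

section
/- Expression of the stress–energy component τ₂₂ on the initial null hypersurface (second identity of (3.5), proved in Appendix B): Suppose that at every point x of G¹ one has g₂₂(x) = g₂₃(x) = g₂₄(x) = 0 and A₂(x) = 0. Then at every point of G¹ one has τ₂₂ = Σ_{α,β∈{3,4}} g^{αβ}·⟨∂₂A_α, ∂₂A_β⟩ + ⟨∂₂Φ, ∂₂Φ⟩. -/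
noncomputable section

variable {𝔤 : Type*} [NormedAddCommGroup 𝔤] [NormedSpace ℝ 𝔤]

/-- Partial derivative `∂ᵢ f` of a `𝔤`-valued function on `ℝ⁴ = (Fin 4 → ℝ)`. -/
def pdv (i : Fin 4) (f : (Fin 4 → ℝ) → 𝔤) (x : Fin 4 → ℝ) : 𝔤 :=
  fderiv ℝ f x (Pi.single i 1)

/-- Yang–Mills curvature `F_{ij} = ∂ᵢA_j − ∂ⱼA_i + ⁅A_i, A_j⁆`, with the bracket given by a
bilinear map `br`. -/
def Fld (br : 𝔤 →ₗ[ℝ] 𝔤 →ₗ[ℝ] 𝔤) (A : Fin 4 → (Fin 4 → ℝ) → 𝔤)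
    (i j : Fin 4) (x : Fin 4 → ℝ) : 𝔤 :=
  pdv i (A j) x - pdv j (A i) x + br (A i x) (A j x)

/-- Gauge covariant derivative `∇̂ᵢΦ = ∂ᵢΦ + ⁅A_i, Φ⁆` of the Higgs field. -/
def covPhi (br : 𝔤 →ₗ[ℝ] 𝔤 →ₗ[ℝ] 𝔤) (A : Fin 4 → (Fin 4 → ℝ) → 𝔤)
    (Φ : (Fin 4 → ℝ) → 𝔤) (i : Fin 4) (x : Fin 4 → ℝ) : 𝔤 :=
  pdv i Φ x + br (A i x) (Φ x)

/-- Reduced stress–energy components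
`τ_{ij} = g^{kl}⟨F_{ik},F_{jl}⟩ − ¼ g_{ij} g^{ka}g^{lb}⟨F_{kl},F_{ab}⟩
         + ⟨∇̂ᵢΦ,∇̂ⱼΦ⟩ + ½ g_{ij} V(⟨Φ,Φ⟩)`. -/
def tauSE (g : (Fin 4 → ℝ) → Matrix (Fin 4) (Fin 4) ℝ)
    (br : 𝔤 →ₗ[ℝ] 𝔤 →ₗ[ℝ] 𝔤) (B : 𝔤 →ₗ[ℝ] 𝔤 →ₗ[ℝ] ℝ)
    (A : Fin 4 → (Fin 4 → ℝ) → 𝔤) (Φ : (Fin 4 → ℝ) → 𝔤) (V : ℝ → ℝ)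
    (i j : Fin 4) (x : Fin 4 → ℝ) : ℝ :=
  (∑ k, ∑ l, up g k l x * B (Fld br A i k x) (Fld br A j l x))
    - (1 / 4) * lo g i j x *
        (∑ k, ∑ a, ∑ l, ∑ b, up g k a x * up g l b x * B (Fld br A k l x) (Fld br A a b x))
    + B (covPhi br A Φ i x) (covPhi br A Φ j x)
    + (1 / 2) * lo g i j x * V (B (Φ x) (Φ x))

/-- A tangential derivative of a function vanishing on `{x¹ = 0}` vanishes. -/
lemma tangent_pdv_zero {𝔤 : Type*} [NormedAddCommGroup 𝔤] [NormedSpace ℝ 𝔤]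
    (f : (Fin 4 → ℝ) → 𝔤) (hf : Differentiable ℝ f)
    (h0 : ∀ y : Fin 4 → ℝ, y 0 = 0 → f y = 0)
    (x : Fin 4 → ℝ) (hx : x 0 = 0) (k : Fin 4) (hk : k ≠ 0) :
    pdv k f x = 0 := by
  set e : Fin 4 → ℝ := Pi.single k 1 with he
  have hc : ∀ t : ℝ, f (x + t • e) = 0 := by
    intro t
    apply h0
    have h1 : e 0 = 0 := Pi.single_eq_of_ne (Ne.symm hk) 1
    simp [h1, hx]
  have hcurve : HasDerivAt (fun t : ℝ => x + t • e) e 0 := by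
    have h1 : HasDerivAt (fun t : ℝ => t • e) ((1:ℝ) • e) 0 :=
      (hasDerivAt_id (0:ℝ)).smul_const e
    simpa using h1.const_add x
  have hfd : HasFDerivAt f (fderiv ℝ f x) ((fun t : ℝ => x + t • e) 0) := by
    simpa using (hf x).hasFDerivAt
  have hcomp : HasDerivAt (fun t : ℝ => f (x + t • e))
      (fderiv ℝ f x e) 0 := hfd.comp_hasDerivAt 0 hcurve
  rw [funext hc] at hcomp
  have := hcomp.unique (hasDerivAt_const 0 (0:𝔤))
  simpa [pdv, he] using this

/-- second identity of (3.5), Appendix B: on the null hypersurface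
`G¹ = {x¹ = 0}` (paper indices `1,2,3,4` realized as `0,1,2,3 : Fin 4`), if
`g₂₂ = g₂₃ = g₂₄ = 0` and `A₂ = 0` on `G¹`, then on `G¹`:
`τ₂₂ = Σ_{α,β∈{3,4}} g^{αβ}⟨∂₂A_α, ∂₂A_β⟩ + ⟨∂₂Φ, ∂₂Φ⟩`. -/
theorem tau_22_on_null_hypersurface
    {𝔤 : Type*} [NormedAddCommGroup 𝔤] [NormedSpace ℝ 𝔤] [FiniteDimensional ℝ 𝔤]
    (br : 𝔤 →ₗ[ℝ] 𝔤 →ₗ[ℝ] 𝔤)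
    (hbr_alt : ∀ a : 𝔤, br a a = 0)
    (hbr_jacobi : ∀ a b c : 𝔤, br a (br b c) + br b (br c a) + br c (br a b) = 0)
    (B : 𝔤 →ₗ[ℝ] 𝔤 →ₗ[ℝ] ℝ) (hB_symm : ∀ a b : 𝔤, B a b = B b a)
    (V : ℝ → ℝ) (hV : ContDiff ℝ (⊤ : ℕ∞) V)
    (g : (Fin 4 → ℝ) → Matrix (Fin 4) (Fin 4) ℝ)
    (hg : ∀ i j, ContDiff ℝ (⊤ : ℕ∞) fun x => g x i j)
    (hsymm : ∀ x, (g x).IsSymm)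
    (hinv : ∀ x, IsUnit (g x).det)
    (A : Fin 4 → (Fin 4 → ℝ) → 𝔤) (hA : ∀ i, ContDiff ℝ (⊤ : ℕ∞) (A i))
    (Φ : (Fin 4 → ℝ) → 𝔤) (hΦ : ContDiff ℝ (⊤ : ℕ∞) Φ)
    (hnull : ∀ x : Fin 4 → ℝ, x 0 = 0 →
      (g x 1 1 = 0 ∧ g x 1 2 = 0 ∧ g x 1 3 = 0) ∧ A 1 x = 0)
    (x : Fin 4 → ℝ) (hx : x 0 = 0) :
    tauSE g br B A Φ V 1 1 x =
      (∑ α ∈ ({2, 3} : Finset (Fin 4)), ∑ β ∈ ({2, 3} : Finset (Fin 4)),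
        up g α β x * B (pdv 1 (A α) x) (pdv 1 (A β) x))
      + B (pdv 1 Φ x) (pdv 1 Φ x) := by
  obtain ⟨⟨h11, h12, h13⟩, hA1⟩ := hnull x hx
  -- tangential derivatives of A 1 vanish on the hypersurface
  have hA1d : ∀ k : Fin 4, k ≠ 0 → pdv k (A 1) x = 0 := fun k hk =>
    tangent_pdv_zero (A 1) ((hA 1).differentiable (by simp))
      (fun y hy => (hnull y hy).2) x hx k hk
  -- row 1 of g vanishes except entry (1,0), whence g x 1 0 ≠ 0
  have h10 : g x 1 0 ≠ 0 := by
    intro h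
    have hdet : (g x).det = 0 := Matrix.det_eq_zero_of_row_eq_zero 1 (by
      intro j; fin_cases j <;> assumption)
    exact (hinv x).ne_zero hdet
  have hsx := hsymm x
  have hsapp : ∀ i j : Fin 4, g x i j = g x j i := by
    intro i j; exact Matrix.IsSymm.apply hsx j i
  -- inverse metric: row 0 and column 0 vanish except entry pairing with index 1
  have hmul : g x * (g x)⁻¹ = 1 := Matrix.mul_nonsing_inv _ (hinv x)
  have hmul' : (g x)⁻¹ * g x = 1 := Matrix.nonsing_inv_mul _ (hinv x)
  have hrow0 : ∀ l : Fin 4, l ≠ 1 → (g x)⁻¹ 0 l = 0 := by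
    intro l hl
    have h := congrFun (congrFun hmul 1) l
    rw [Matrix.mul_apply, Fin.sum_univ_four] at h
    rw [h11, h12, h13] at h
    have h1l : (1 : Matrix (Fin 4) (Fin 4) ℝ) 1 l = 0 :=
      Matrix.one_apply_ne (Ne.symm hl)
    rw [h1l] at h
    have : g x 1 0 * (g x)⁻¹ 0 l = 0 := by linarith
    exact (mul_eq_zero.mp this).resolve_left h10
  have hcol0 : ∀ l : Fin 4, l ≠ 1 → (g x)⁻¹ l 0 = 0 := by
    intro l hl
    have h := congrFun (congrFun hmul' l) 1
    rw [Matrix.mul_apply, Fin.sum_univ_four] at h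
    have h21 : g x 2 1 = 0 := (hsapp 2 1).trans h12
    have h31 : g x 3 1 = 0 := (hsapp 3 1).trans h13
    rw [h11, h21, h31] at h
    have h1l : (1 : Matrix (Fin 4) (Fin 4) ℝ) l 1 = 0 := Matrix.one_apply_ne hl
    rw [h1l] at h
    have h01 : g x 0 1 ≠ 0 := by rw [hsapp 0 1]; exact h10
    have : (g x)⁻¹ l 0 * g x 0 1 = 0 := by linarith
    exact (mul_eq_zero.mp this).resolve_right h01
  -- field strength components
  have hF11 : Fld br A 1 1 x = 0 := by
    simp [Fld, hbr_alt]
  have hF12 : Fld br A 1 2 x = pdv 1 (A 2) x := by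
    simp [Fld, hA1, hA1d 2 (by decide)]
  have hF13 : Fld br A 1 3 x = pdv 1 (A 3) x := by
    simp [Fld, hA1, hA1d 3 (by decide)]
  have hcov : covPhi br A Φ 1 x = pdv 1 Φ x := by
    simp [covPhi, hA1]
  have hlo : lo g 1 1 x = 0 := h11
  have u00 : up g 0 0 x = 0 := hrow0 0 (by decide)
  have u02 : up g 0 2 x = 0 := hrow0 2 (by decide)
  have u03 : up g 0 3 x = 0 := hrow0 3 (by decide)
  have u20 : up g 2 0 x = 0 := hcol0 2 (by decide)
  have u30 : up g 3 0 x = 0 := hcol0 3 (by decide)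
  simp only [tauSE, Fin.sum_univ_four, hF11, hF12, hF13, hcov, hlo, u00, u02, u03,
    u20, u30, map_zero, LinearMap.zero_apply, mul_zero, zero_mul, add_zero, zero_add,
    Finset.sum_insert (by decide : (2:Fin 4) ∉ ({3} : Finset (Fin 4))),
    Finset.sum_singleton]
  ring
end
end

section
/- Expression of the contracted Christoffel symbol Γ¹ on the initial null hypersurface (from the proof of Proposition 3.5): Suppose g₂₂(x) = g₂₃(x) = g₂₄(x) = 0 at every point x of G¹. Then at every point of G¹ one has 2Γ¹ = g^{12}·(2g^{12}·∂₁g₂₂ − Σ_{α,β∈{3,4}} g^{αβ}·∂₂g_{αβ}). In particular, if in addition Σ_{α,β∈{3,4}} g^{αβ}·∂₂g_{αβ} = 4·g^{12}·∂₂g₁₂ at every point of G¹, then Γ¹ = (g^{12})²·(∂₁g₂₂ − 2·∂₂g₁₂) at every point of G¹. -/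
noncomputable section

lemma tangential_pd_zero (f : (Fin 4 → ℝ) → ℝ) (hf : Differentiable ℝ f)
    (h0 : ∀ y : Fin 4 → ℝ, y 0 = 0 → f y = 0) {i : Fin 4} (hi : i ≠ 0)
    {x : Fin 4 → ℝ} (hx : x 0 = 0) : pd i f x = 0 := by
  have hL : HasDerivAt (fun t : ℝ => x + t • (Pi.single i 1 : Fin 4 → ℝ))
      (Pi.single i 1 : Fin 4 → ℝ) 0 := by
    simpa using ((hasDerivAt_id (0:ℝ)).smul_const (Pi.single i 1 : Fin 4 → ℝ)).const_add x
  have key : HasDerivAt (fun t : ℝ => f (x + t • (Pi.single i 1 : Fin 4 → ℝ)))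
      (fderiv ℝ f x (Pi.single i 1)) 0 := by
    have h1 : HasFDerivAt f (fderiv ℝ f x) (x + (0:ℝ) • (Pi.single i 1 : Fin 4 → ℝ)) := by
      simpa using (hf x).hasFDerivAt
    exact h1.comp_hasDerivAt 0 hL
  have hz : (fun t : ℝ => f (x + t • (Pi.single i 1 : Fin 4 → ℝ))) = fun _ => 0 := by
    funext t
    apply h0
    simp [hx, Pi.single_eq_of_ne (Ne.symm hi)]
  rw [hz] at key
  have h2 := (hasDerivAt_const (0:ℝ) (0:ℝ)).unique key
  simpa [pd] using h2.symm

/-- from the proof of Proposition 3.5: on the null hypersurface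
`G¹ = {x¹ = 0}` (paper indices `1,2,3,4` realized as `0,1,2,3 : Fin 4`), if
`g₂₂ = g₂₃ = g₂₄ = 0` on `G¹`, then on `G¹` one has
`2Γ¹ = g^{12}(2g^{12}∂₁g₂₂ − Σ_{α,β∈{3,4}} g^{αβ}∂₂g_{αβ})`; and if moreover
`Σ_{α,β∈{3,4}} g^{αβ}∂₂g_{αβ} = 4g^{12}∂₂g₁₂` on `G¹`, then
`Γ¹ = (g^{12})²(∂₁g₂₂ − 2∂₂g₁₂)` on `G¹`. -/
theorem contracted_christoffel_one_on_null_hypersurface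
    (g : (Fin 4 → ℝ) → Matrix (Fin 4) (Fin 4) ℝ)
    (hg : ∀ i j, ContDiff ℝ (⊤ : ℕ∞) fun x => g x i j)
    (hsymm : ∀ x, (g x).IsSymm)
    (hinv : ∀ x, IsUnit (g x).det)
    (hnull : ∀ x : Fin 4 → ℝ, x 0 = 0 → g x 1 1 = 0 ∧ g x 1 2 = 0 ∧ g x 1 3 = 0) :
    (∀ x : Fin 4 → ℝ, x 0 = 0 →
      2 * ChrC g 0 x
        = up g 0 1 x * (2 * up g 0 1 x * pd 0 (lo g 1 1) x
            - ∑ α ∈ ({2, 3} : Finset (Fin 4)), ∑ β ∈ ({2, 3} : Finset (Fin 4)),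
                up g α β x * pd 1 (lo g α β) x)) ∧
    ((∀ x : Fin 4 → ℝ, x 0 = 0 →
        (∑ α ∈ ({2, 3} : Finset (Fin 4)), ∑ β ∈ ({2, 3} : Finset (Fin 4)),
            up g α β x * pd 1 (lo g α β) x) = 4 * up g 0 1 x * pd 1 (lo g 0 1) x) →
      ∀ x : Fin 4 → ℝ, x 0 = 0 →
        ChrC g 0 x = (up g 0 1 x) ^ 2 * (pd 0 (lo g 1 1) x - 2 * pd 1 (lo g 0 1) x)) := by

  have losym : ∀ i j : Fin 4, lo g i j = lo g j i := by
    intro i j; funext y; exact (hsymm y).apply j i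
  have key : ∀ x : Fin 4 → ℝ, x 0 = 0 →
      2 * ChrC g 0 x
        = up g 0 1 x * (2 * up g 0 1 x * pd 0 (lo g 1 1) x
            - ∑ α ∈ ({2, 3} : Finset (Fin 4)), ∑ β ∈ ({2, 3} : Finset (Fin 4)),
                up g α β x * pd 1 (lo g α β) x) := by
    intro x hx
    have h11 : g x 1 1 = 0 := (hnull x hx).1
    have h12 : g x 1 2 = 0 := (hnull x hx).2.1
    have h13 : g x 1 3 = 0 := (hnull x hx).2.2
    have h21 : g x 2 1 = 0 := by rw [(hsymm x).apply 1 2]; exact h12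
    have h31 : g x 3 1 = 0 := by rw [(hsymm x).apply 1 3]; exact h13
    have hBA : (g x)⁻¹ * g x = 1 := Matrix.nonsing_inv_mul _ (hinv x)
    have col : ∀ i : Fin 4, (g x)⁻¹ i 0 * g x 0 1
        = (1 : Matrix (Fin 4) (Fin 4) ℝ) i 1 := by
      intro i
      have ei : ((g x)⁻¹ * g x) i 1 = (1 : Matrix (Fin 4) (Fin 4) ℝ) i 1 := by rw [hBA]
      rw [Matrix.mul_apply, Fin.sum_univ_four, h11, h21, h31] at ei
      simpa using ei
    have e1 : (g x)⁻¹ 1 0 * g x 0 1 = 1 := by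
      rw [col 1]; simp [Matrix.one_apply]
    have hg01 : g x 0 1 ≠ 0 := by
      intro h; rw [h, mul_zero] at e1; exact zero_ne_one e1
    have inv0 : ∀ i : Fin 4, i ≠ 1 → (g x)⁻¹ i 0 = 0 := by
      intro i hi
      have := col i
      rw [Matrix.one_apply_ne hi] at this
      exact (mul_eq_zero.mp this).resolve_right hg01
    have hBsym : ((g x)⁻¹).IsSymm := by
      show _ = _
      rw [Matrix.transpose_nonsing_inv, (hsymm x).eq]
    have upsym : ∀ i j : Fin 4, up g i j x = up g j i x := by
      intro i j
      exact hBsym.apply j i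
    have z00 : up g 0 0 x = 0 := inv0 0 (by decide)
    have z02 : up g 0 2 x = 0 := by rw [upsym]; exact inv0 2 (by decide)
    have z03 : up g 0 3 x = 0 := by rw [upsym]; exact inv0 3 (by decide)
    have pz1 : ∀ i : Fin 4, i ≠ 0 → pd i (lo g 1 1) x = 0 := fun i hi =>
      tangential_pd_zero _ ((hg 1 1).differentiable (by simp))
        (fun y hy => (hnull y hy).1) hi hx
    have pz2 : ∀ i : Fin 4, i ≠ 0 → pd i (lo g 1 2) x = 0 := fun i hi =>
      tangential_pd_zero _ ((hg 1 2).differentiable (by simp))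
        (fun y hy => (hnull y hy).2.1) hi hx
    have pz3 : ∀ i : Fin 4, i ≠ 0 → pd i (lo g 1 3) x = 0 := fun i hi =>
      tangential_pd_zero _ ((hg 1 3).differentiable (by simp))
        (fun y hy => (hnull y hy).2.2) hi hx
    simp only [ChrC, Chr, Fin.sum_univ_four,
      Finset.sum_pair (by decide : (2 : Fin 4) ≠ 3),
      losym 1 0, losym 2 0, losym 3 0, losym 2 1, losym 3 1, losym 3 2,
      upsym 1 0, upsym 2 0, upsym 3 0, upsym 2 1, upsym 3 1, upsym 3 2,
      z00, z02, z03,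
      pz1 1 (by decide), pz1 2 (by decide), pz1 3 (by decide),
      pz2 1 (by decide), pz2 2 (by decide), pz2 3 (by decide),
      pz3 1 (by decide), pz3 2 (by decide), pz3 3 (by decide)]
    ring
  refine ⟨key, fun hS x hx => ?_⟩
  have h1 := key x hx
  have h2 := hS x hx
  linear_combination h1 / 2 - (up g 0 1 x) / 2 * h2
end
end
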